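/- arXiv:1009.4400 — 2 statements merged into one kernel-verified Lean document; each statement's English description precedes it below -/
import Mathlib

section
/- With φ and ψ as defined, for the rewriting rule A∧(B∧C) ↦ (A∧B)∧C, the pair (φ, ψ) strictly decreases lexicographically: either φ(A∧(B∧C)) > φ((A∧B)∧C), or φ(A∧(B∧C)) = φ((A∧B)∧C) and ψ(A∧(B∧C)) > ψ((A∧B)∧C). -/
/-- First-order formulas: ⊤, ⊥, non-constant atoms `X t⃗` (atoms applied to
de Bruijn term-variable indices), implication, conjunction and universal
quantification (de Bruijn style: `all A` binds index 0). -/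
inductive Formula : Type where
  | top : Formula
  | bot : Formula
  | atom : ℕ → List ℕ → Formula
  | arr : Formula → Formula → Formula
  | and : Formula → Formula → Formula
  | all : Formula → Formula

/-- The measure φ on formulas. -/
def phi : Formula → ℕ
  | .top => 2
  | .bot => 2
  | .atom _ _ => 2
  | .and A B => 2 * (phi A + 1) * phi B
  | .arr A B => phi B ^ phi A
  | .all A => phi A ^ 2

/-- The measure ψ on formulas. -/
def psi : Formula → ℕ
  | .top => 2
  | .bot => 2
  | .atom _ _ => 2
  | .and A B => 2 * (psi A + 1) * psi B
  | .arr A B => psi B ^ psi A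
  | .all A => 2 * psi A

theorem phi_pos : ∀ A : Formula, 0 < phi A
  | .top | .bot | .atom _ _ => by simp [phi]
  | .arr _ B => pow_pos (phi_pos B) _
  | .and A B => by have := phi_pos B; simp only [phi]; positivity
  | .all A => pow_pos (phi_pos A) _

/-- With `a, b, c` the φ-values of `A, B, C`, the two sides are `2(2(a+1)b+1)c` and
`4(a+1)(b+1)c`, which differ by `(4a+2)c > 0`. -/
theorem phi_and_assoc_lt (A B C : Formula) :
    phi (.and (.and A B) C) < phi (.and A (.and B C)) := by
  have hC := phi_pos C
  simp only [phi]
  nlinarith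

/-- For the rewriting rule A∧(B∧C) ↦ (A∧B)∧C, the pair (φ, ψ) strictly
decreases lexicographically. -/
theorem lex_decrease_andAssoc :
    ∀ A B C : Formula,
      phi (.and A (.and B C)) > phi (.and (.and A B) C) ∨
        (phi (.and A (.and B C)) = phi (.and (.and A B) C) ∧
          psi (.and A (.and B C)) > psi (.and (.and A B) C)) := by
  intro A B C
  exact Or.inl (phi_and_assoc_lt A B C)
end

section
/- With φ as defined, φ((A∧B)→C) > φ(A→(B→C)) for all formulas A, B, C. That is, φ(C)^(2(φ(A)+1)φ(B)) > (φ(C)^φ(B))^φ(A), using that φ of any formula is at least 2. -/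
theorem two_le_phi (A : Formula) : 2 ≤ phi A := by
  induction A with
  | top | bot | atom => exact le_rfl
  | arr _ _ hA hB => exact hB.trans (Nat.le_self_pow (by omega) _)
  | and _ _ _ hB => simp only [phi]; nlinarith
  | all _ hA => simp only [phi]; nlinarith

/-- φ((A∧B)→C) > φ(A→(B→C)) for all formulas A, B, C. -/
theorem phi_decrease_curry :
    ∀ A B C : Formula, phi (.arr (.and A B) C) > phi (.arr A (.arr B C)) := by
  intro A B C
  have hB := two_le_phi B
  have hC := two_le_phi C
  show (phi C ^ phi B) ^ phi A < phi C ^ (2 * (phi A + 1) * phi B)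
  rw [← pow_mul]
  exact Nat.pow_lt_pow_right hC (by nlinarith)
end
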